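/- Let E and F be complete lattices and f : E × F → E × F monotone with components f₁, f₂. Write a = μx. f₁(x, μy. f₂(x,y)) and b = μy. f₂(a, y). Then (a, b) is a fixed point of f, i.e., f₁(a,b) = a and f₂(a,b) = b. -/
import Mathlib


/-- Least fixed point of `g` (Knaster-Tarski for monotone `g`). -/
def lfp {α : Type*} [CompleteLattice α] (g : α → α) : α := sInf {x | g x ≤ x}

lemma lfp_le' {α : Type*} [CompleteLattice α] {g : α → α} {x : α} (h : g x ≤ x) :
    lfp g ≤ x := sInf_le h

lemma lfp_fixed {α : Type*} [CompleteLattice α] {g : α → α} (hg : Monotone g) :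
    g (lfp g) = lfp g := by
  have h1 : g (lfp g) ≤ lfp g := le_sInf fun x hx => (hg (sInf_le hx)).trans hx
  exact le_antisymm h1 (lfp_le' (hg h1))

lemma lfp_mono' {α : Type*} [CompleteLattice α] {g h : α → α} (hgh : ∀ x, g x ≤ h x) :
    lfp g ≤ lfp h :=
  le_sInf fun x hx => sInf_le ((hgh x).trans hx)

theorem bekic_is_fixed {E F : Type*} [CompleteLattice E] [CompleteLattice F]
    (f : E × F → E × F) (hf : Monotone f) (a : E) (b : F)
    (ha : a = lfp (fun x => (f (x, lfp (fun y => (f (x, y)).2))).1))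
    (hb : b = lfp (fun y => (f (a, y)).2)) :
    (f (a, b)).1 = a ∧ (f (a, b)).2 = b := by
  have hm2 : ∀ x : E, Monotone (fun y => (f (x, y)).2) := fun x y1 y2 hy =>
    (hf (Prod.mk_le_mk.mpr ⟨le_rfl, hy⟩)).2
  have hlfp2 : Monotone (fun x => lfp (fun y => (f (x, y)).2)) := fun x1 x2 hx =>
    lfp_mono' fun y => (hf (Prod.mk_le_mk.mpr ⟨hx, le_rfl⟩)).2
  have hm1 : Monotone (fun x => (f (x, lfp (fun y => (f (x, y)).2))).1) := fun x1 x2 hx =>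
    (hf (Prod.mk_le_mk.mpr ⟨hx, hlfp2 hx⟩)).1
  have h2 : (f (a, b)).2 = b := by
    rw [hb]; exact lfp_fixed (hm2 a)
  have h1 : (f (a, b)).1 = a := by
    have := lfp_fixed hm1
    rw [ha, ← hb] at *
    simpa [← hb] using this
  exact ⟨h1, h2⟩
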